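/- Let V = { (x₁,x₂,x₃,x₄,x₅,x,y) ∈ ℝ⁷ : x₄ ≠ 0 and x₅ ≠ 0 }. The map h₁(x₁,x₂,x₃,x₄,x₅,x,y) = (x₁,x₃,x₂,x₅,x₄,x,y) restricts to a homeomorphism of V onto itself, and for every c ∈ ℝ and every pair of signs ε, δ ∈ {+1,−1}, h₁ maps the set { v ∈ V : x₂ − x₃x₄/x₅ = c, εx₄ > 0, δx₅ > 0 } bijectively onto the set { v ∈ V : x₃ − x₂x₅/x₄ = c, δx₄ > 0, εx₅ > 0 }. (Hence h₁ is a topological equivalence between the foliation of V by the leaves of the first family and the foliation of V by the leaves of the second family.) -/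
import Mathlib


noncomputable section

/-- The foliated manifold `V = {x₄ ≠ 0, x₅ ≠ 0} ⊆ ℝ⁷` (coordinates
`(x₁,…,x₅,x,y)` indexed by `0,…,6`). -/
def V : Set (Fin 7 → ℝ) := {v | v 3 ≠ 0 ∧ v 4 ≠ 0}

/-- The map `h₁(x₁,x₂,x₃,x₄,x₅,x,y) = (x₁,x₃,x₂,x₅,x₄,x,y)`. -/
def h1 (v : Fin 7 → ℝ) : Fin 7 → ℝ := ![v 0, v 2, v 1, v 4, v 3, v 5, v 6]

lemma h1_apply (v : Fin 7 → ℝ) :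
    h1 v 0 = v 0 ∧ h1 v 1 = v 2 ∧ h1 v 2 = v 1 ∧ h1 v 3 = v 4 ∧
    h1 v 4 = v 3 ∧ h1 v 5 = v 5 ∧ h1 v 6 = v 6 :=
  ⟨rfl, rfl, rfl, rfl, rfl, rfl, rfl⟩

lemma h1_invol (v : Fin 7 → ℝ) : h1 (h1 v) = v := by
  funext i
  fin_cases i <;> rfl

lemma h1_continuous : Continuous h1 := by
  apply continuous_pi
  intro i
  fin_cases i <;> exact continuous_apply _

lemma h1_mem_V {v : Fin 7 → ℝ} (hv : v ∈ V) : h1 v ∈ V := by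
  obtain ⟨h3, h4⟩ := hv
  exact ⟨by simpa [h1] using h4, by simpa [h1] using h3⟩

/-- `h₁` restricts to a homeomorphism of `V` onto itself, and it maps each leaf
`{x₂ − x₃x₄/x₅ = c, εx₄ > 0, δx₅ > 0}` of the G₂-foliation bijectively onto the
leaf `{x₃ − x₂x₅/x₄ = c, δx₄ > 0, εx₅ > 0}` of the G₄⁰⁰-foliation. -/
theorem h1_topological_equivalence :
    (∃ H : V ≃ₜ V, ∀ v : V, (H v : Fin 7 → ℝ) = h1 v) ∧
    ∀ (c ε δ : ℝ), (ε = 1 ∨ ε = -1) → (δ = 1 ∨ δ = -1) →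
      Set.BijOn h1
        {v ∈ V | v 1 - v 2 * v 3 / v 4 = c ∧ ε * v 3 > 0 ∧ δ * v 4 > 0}
        {v ∈ V | v 2 - v 1 * v 4 / v 3 = c ∧ δ * v 3 > 0 ∧ ε * v 4 > 0} := by
  constructor
  · refine ⟨{
      toFun := fun v => ⟨h1 v, h1_mem_V v.2⟩
      invFun := fun v => ⟨h1 v, h1_mem_V v.2⟩
      left_inv := fun v => Subtype.ext (h1_invol v)
      right_inv := fun v => Subtype.ext (h1_invol v)
      continuous_toFun := Continuous.subtype_mk (h1_continuous.comp continuous_subtype_val) _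
      continuous_invFun := Continuous.subtype_mk (h1_continuous.comp continuous_subtype_val) _
    }, fun v => rfl⟩
  · intro c ε δ hε hδ
    have key : ∀ v : Fin 7 → ℝ,
        v ∈ {v ∈ V | v 1 - v 2 * v 3 / v 4 = c ∧ ε * v 3 > 0 ∧ δ * v 4 > 0} →
        h1 v ∈ {v ∈ V | v 2 - v 1 * v 4 / v 3 = c ∧ δ * v 3 > 0 ∧ ε * v 4 > 0} := by
      rintro v ⟨hv, hc, h3, h4⟩
      refine ⟨h1_mem_V hv, ?_, ?_, ?_⟩
      · simpa [h1] using hc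
      · simpa [h1] using h4
      · simpa [h1] using h3
    have key' : ∀ v : Fin 7 → ℝ,
        v ∈ {v ∈ V | v 2 - v 1 * v 4 / v 3 = c ∧ δ * v 3 > 0 ∧ ε * v 4 > 0} →
        h1 v ∈ {v ∈ V | v 1 - v 2 * v 3 / v 4 = c ∧ ε * v 3 > 0 ∧ δ * v 4 > 0} := by
      rintro v ⟨hv, hc, h3, h4⟩
      refine ⟨h1_mem_V hv, ?_, ?_, ?_⟩
      · simpa [h1] using hc
      · simpa [h1] using h4
      · simpa [h1] using h3
    refine ⟨key, ?_, ?_⟩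
    · intro a _ b _ hab
      have := congrArg h1 hab
      rwa [h1_invol, h1_invol] at this
    · intro w hw
      exact ⟨h1 w, key' w hw, h1_invol w⟩

end
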